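/- arXiv:1409.0485 — 9 statements merged into one kernel-verified Lean document; each statement's English description precedes it below -/
import Mathlib

section
/- (Schönheim bound) Any (v,k,λ)-covering has at least ⌈v·r/k⌉ blocks, where r = ⌈λ(v−1)/(k−1)⌉. -/
/-!
Fix a point `x`. Each of the `v - 1` pairs `{x, w}` lies in at least `λ` blocks, and a block
through `x` contains exactly `k - 1` such pairs, so the number `r_x` of blocks through `x`
satisfies `(k - 1) r_x ≥ λ (v - 1)`, i.e. `r_x ≥ r`. Counting point–block incidences gives
`∑ₓ r_x = k |𝓑|`, hence `k |𝓑| ≥ v r`.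
-/

open Finset

namespace Multiset

variable {α β : Type*}

theorem countP_eq_sum_map_ite (p : α → Prop) [DecidablePred p] (s : Multiset α) :
    s.countP p = (s.map fun a => if p a then 1 else 0).sum := by
  induction s using Multiset.induction_on with
  | empty => simp
  | cons a s ih => by_cases h : p a <;> simp [h, ih, add_comm]

theorem sum_countP_eq_sum_map_card_filter (W : Finset β) (p : β → α → Prop)
    [∀ w a, Decidable (p w a)] (s : Multiset α) :
    ∑ w ∈ W, s.countP (p w) = (s.map fun a => #{w ∈ W | p w a}).sum := by
  simp only [countP_eq_sum_map_ite, card_filter]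
  exact Multiset.sum_map_sum_map _ _

end Multiset

section Covering

variable {α : Type*} [Fintype α] [DecidableEq α] {𝓑 : Multiset (Finset α)} {k l : ℕ}

theorem sum_countP_mem_eq_mul_card (hblocks : ∀ b ∈ 𝓑, b.card = k) :
    ∑ x, 𝓑.countP (x ∈ ·) = k * Multiset.card 𝓑 := by
  rw [Multiset.sum_countP_eq_sum_map_card_filter]
  simp only [filter_mem_eq_inter, univ_inter]
  rw [Multiset.map_congr rfl hblocks, Multiset.map_const', Multiset.sum_replicate, smul_eq_mul,
    mul_comm]

theorem sum_countP_pair_eq_mul_countP (hblocks : ∀ b ∈ 𝓑, b.card = k) (x : α) :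
    ∑ w ∈ univ.erase x, 𝓑.countP (fun b => x ∈ b ∧ w ∈ b) = (k - 1) * 𝓑.countP (x ∈ ·) := by
  rw [Multiset.sum_countP_eq_sum_map_card_filter, Multiset.countP_eq_sum_map_ite,
    ← Multiset.sum_map_mul_left]
  congr 1
  refine Multiset.map_congr rfl fun b hb => ?_
  split_ifs with hx
  · rw [mul_one, ← hblocks b hb, ← card_erase_of_mem hx]
    congr 1
    ext w
    simp [hx, and_comm]
  · simp [hx]

theorem mul_card_sub_one_le_mul_countP (hblocks : ∀ b ∈ 𝓑, b.card = k)
    (hcov : ∀ u w : α, u ≠ w → l ≤ 𝓑.countP (fun b => u ∈ b ∧ w ∈ b)) (x : α) :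
    l * (Fintype.card α - 1) ≤ (k - 1) * 𝓑.countP (x ∈ ·) := by
  calc l * (Fintype.card α - 1) = ∑ _w ∈ univ.erase x, l := by simp [card_erase_of_mem, mul_comm]
    _ ≤ ∑ w ∈ univ.erase x, 𝓑.countP (fun b => x ∈ b ∧ w ∈ b) :=
      sum_le_sum fun w hw => hcov x w (ne_of_mem_erase hw).symm
    _ = (k - 1) * 𝓑.countP (x ∈ ·) := sum_countP_pair_eq_mul_countP hblocks x

theorem ceil_div_le_countP (hk : 2 ≤ k) (hblocks : ∀ b ∈ 𝓑, b.card = k)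
    (hcov : ∀ u w : α, u ≠ w → l ≤ 𝓑.countP (fun b => u ∈ b ∧ w ∈ b)) (x : α) :
    ⌈(l * (Fintype.card α - 1) : ℚ) / (k - 1)⌉ ≤ 𝓑.countP (x ∈ ·) := by
  have hα : 1 ≤ Fintype.card α := Fintype.card_pos_iff.2 ⟨x⟩
  have h := mul_card_sub_one_le_mul_countP hblocks hcov x
  rw [← Nat.cast_le (α := ℚ)] at h
  push_cast [Nat.cast_sub hα, Nat.cast_sub (by omega : 1 ≤ k)] at h
  rw [Int.ceil_le, div_le_iff₀ (by rify at hk ⊢; linarith)]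
  push_cast
  linarith

theorem ceil_card_mul_ceil_div_le_card (hk : 2 ≤ k) (hblocks : ∀ b ∈ 𝓑, b.card = k)
    (hcov : ∀ u w : α, u ≠ w → l ≤ 𝓑.countP (fun b => u ∈ b ∧ w ∈ b)) :
    ⌈(Fintype.card α * ⌈(l * (Fintype.card α - 1) : ℚ) / (k - 1)⌉ : ℚ) / k⌉ ≤
      Multiset.card 𝓑 := by
  set r := ⌈(l * (Fintype.card α - 1) : ℚ) / (k - 1)⌉
  have hsum : (Fintype.card α : ℤ) * r ≤ k * Multiset.card 𝓑 :=
    calc (Fintype.card α : ℤ) * r = ∑ _x : α, r := by simp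
      _ ≤ ∑ x : α, (𝓑.countP (x ∈ ·) : ℤ) :=
        sum_le_sum fun x _ => ceil_div_le_countP hk hblocks hcov x
      _ = k * Multiset.card 𝓑 := by exact_mod_cast sum_countP_mem_eq_mul_card hblocks
  rw [Int.ceil_le, div_le_iff₀ (by positivity)]
  exact_mod_cast hsum.trans_eq (mul_comm _ _)

end Covering

theorem stmt_6_general (v k l : ℕ) (hk : 2 ≤ k)
    (𝓑 : Multiset (Finset (Fin v)))
    (hblocks : ∀ b ∈ 𝓑, b.card = k)
    (hcov : ∀ u w : Fin v, u ≠ w → l ≤ 𝓑.countP (fun b => u ∈ b ∧ w ∈ b))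
    (r : ℤ) (hr : r = ⌈(l * (v - 1) : ℚ) / (k - 1)⌉) :
    (⌈(v * r : ℚ) / k⌉ : ℤ) ≤ (Multiset.card 𝓑 : ℤ) := by
  subst hr
  simpa using ceil_card_mul_ceil_div_le_card hk hblocks hcov

theorem stmt_6 (v k l : ℕ) (hl : 0 < l) (hk : 2 ≤ k) (hkv : k ≤ v)
    (𝓑 : Multiset (Finset (Fin v)))
    (hblocks : ∀ b ∈ 𝓑, b.card = k)
    (hcov : ∀ u w : Fin v, u ≠ w → l ≤ 𝓑.countP (fun b => u ∈ b ∧ w ∈ b))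
    (r : ℤ) (hr : r = ⌈(l * (v - 1) : ℚ) / (k - 1)⌉) :
    (⌈(v * r : ℚ) / k⌉ : ℤ) ≤ (Multiset.card 𝓑 : ℤ) :=
  stmt_6_general v k l hk 𝓑 hblocks hcov r hr
end

section
/- (Johnson bound) Any (v,k,λ)-packing has at most ⌊v·r/k⌋ blocks, where r = ⌊λ(v−1)/(k−1)⌋. -/
/-! Double counting. Each point `x` lies in `r_x` blocks, and counting the pairs `(w, b)`
with `w ≠ x` and `x, w ∈ b` gives `(k - 1) r_x ≤ λ (v - 1)`, so `r_x ≤ r`. Counting the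
incidences `(x, b)` with `x ∈ b` gives `k |𝓑| = ∑ₓ r_x ≤ v r`. -/

open Finset

namespace Multiset

variable {α : Type*} [DecidableEq α]

theorem sum_countP_mem (M : Multiset (Finset α)) (s : Finset α) :
    ∑ x ∈ s, M.countP (x ∈ ·) = (M.map fun b => #(s ∩ b)).sum := by
  induction M using Multiset.induction with
  | empty => simp
  | cons a M ih => simp [countP_cons, sum_add_distrib, ih, add_comm]

theorem sum_countP_mem_of_card_eq {s : Finset α} {k : ℕ} {M : Multiset (Finset α)}
    (hM : ∀ b ∈ M, #(s ∩ b) = k) :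
    ∑ x ∈ s, M.countP (x ∈ ·) = k * card M := by
  rw [sum_countP_mem, map_congr rfl hM, map_const', sum_replicate, smul_eq_mul, mul_comm]

variable [Fintype α]

theorem mul_countP_mem_le_of_pair_le {k l : ℕ} {M : Multiset (Finset α)}
    (hM : ∀ b ∈ M, #b = k)
    (hpair : ∀ u w : α, u ≠ w → M.countP (fun b => u ∈ b ∧ w ∈ b) ≤ l) (x : α) :
    (k - 1) * M.countP (x ∈ ·) ≤ l * (Fintype.card α - 1) := by
  have hcard : ∀ b ∈ M.filter (x ∈ ·), #(univ.erase x ∩ b) = k - 1 := by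
    intro b hb
    obtain ⟨hbM, hxb⟩ := mem_filter.mp hb
    rw [erase_inter, univ_inter, Finset.card_erase_of_mem hxb, hM b hbM]
  calc (k - 1) * M.countP (x ∈ ·)
      = ∑ w ∈ univ.erase x, (M.filter (x ∈ ·)).countP (w ∈ ·) := by
        rw [sum_countP_mem_of_card_eq hcard, countP_eq_card_filter]
    _ ≤ ∑ _w ∈ univ.erase x, l := by
        refine sum_le_sum fun w hw => ?_
        rw [countP_filter]
        exact hpair w x (ne_of_mem_erase hw)
    _ = l * (Fintype.card α - 1) := by
        rw [sum_const, Finset.card_erase_of_mem (mem_univ x), card_univ, smul_eq_mul, mul_comm]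

end Multiset

theorem Int.le_floor_div_of_mul_le {n : ℤ} {a b : ℚ} (hb : 0 < b) (h : n * b ≤ a) :
    n ≤ ⌊a / b⌋ := by
  rwa [Int.le_floor, le_div_iff₀ hb]

theorem stmt_7_general (v k l : ℕ) (hk : 2 ≤ k)
    (𝓑 : Multiset (Finset (Fin v)))
    (hblocks : ∀ b ∈ 𝓑, b.card = k)
    (hpack : ∀ u w : Fin v, u ≠ w → 𝓑.countP (fun b => u ∈ b ∧ w ∈ b) ≤ l)
    (r : ℤ) (hr : r = ⌊(l * (v - 1) : ℚ) / (k - 1)⌋) :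
    (Multiset.card 𝓑 : ℤ) ≤ (⌊(v * r : ℚ) / k⌋ : ℤ) := by
  have hk' : (2 : ℚ) ≤ k := by exact_mod_cast hk
  have replication_le : ∀ x : Fin v, (𝓑.countP (x ∈ ·) : ℤ) ≤ r := fun x => by
    have hx := Multiset.mul_countP_mem_le_of_pair_le hblocks hpack x
    rw [Fintype.card_fin] at hx
    have hv : 1 ≤ v := x.pos
    rw [hr]
    refine Int.le_floor_div_of_mul_le (by linarith) ?_
    rw [← @Nat.cast_le ℚ] at hx
    push_cast [Nat.cast_sub (by omega : 1 ≤ k), Nat.cast_sub hv] at hx ⊢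
    linarith
  have incidences : (k : ℤ) * Multiset.card 𝓑 ≤ v * r := by
    have h := Multiset.sum_countP_mem_of_card_eq (s := univ) (by simpa using hblocks)
    calc (k : ℤ) * Multiset.card 𝓑 = ∑ x : Fin v, (𝓑.countP (x ∈ ·) : ℤ) := by
          exact_mod_cast h.symm
      _ ≤ ∑ _x : Fin v, r := sum_le_sum fun x _ => replication_le x
      _ = v * r := by simp
  refine Int.le_floor_div_of_mul_le (by linarith) ?_
  exact_mod_cast (by linarith : (Multiset.card 𝓑 : ℤ) * k ≤ v * r)

theorem stmt_7 (v k l : ℕ) (hl : 0 < l) (hk : 2 ≤ k) (hkv : k ≤ v)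
    (𝓑 : Multiset (Finset (Fin v)))
    (hblocks : ∀ b ∈ 𝓑, b.card = k)
    (hpack : ∀ u w : Fin v, u ≠ w → 𝓑.countP (fun b => u ∈ b ∧ w ∈ b) ≤ l)
    (r : ℤ) (hr : r = ⌊(l * (v - 1) : ℚ) / (k - 1)⌋) :
    (Multiset.card 𝓑 : ℤ) ≤ (⌊(v * r : ℚ) / k⌋ : ℤ) :=
  stmt_7_general v k l hk 𝓑 hblocks hpack r hr
end

section
/- (Fisher's inequality) Any non-trivial (v,k,λ)-design has at least v blocks; equivalently, if a (v,k,λ)-design with 3 ≤ k < v exists, then λ(v−1) ≥ k(k−1). -/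
/-!
Let `N` be the point-block incidence matrix and `r u` the number of blocks through `u`. Then
`N Nᵀ = diag (r u - λ) + λ J`. Counting the pairs through a point gives
`r u (k - 1) = λ (v - 1)`, which exceeds `λ (k - 1)` when `k < v`, so `r u > λ` and `N Nᵀ` is
positive definite; hence `v = rank (N Nᵀ) ≤ rank N ≤ b`. Counting incidences, `b k = ∑ r u`, so
`v k (k - 1) ≤ b k (k - 1) = v λ (v - 1)`.
-/

open Finset Matrix

section Incidence

variable {α ι : Type*} [DecidableEq α] [Fintype ι]

def incidenceMatrix (B : ι → Finset α) : Matrix α ι ℝ :=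
  of fun u i => if u ∈ B i then 1 else 0

theorem incidenceMatrix_mul_transpose_apply (B : ι → Finset α) (u w : α) :
    (incidenceMatrix B * (incidenceMatrix B)ᵀ) u w = #{i | u ∈ B i ∧ w ∈ B i} := by
  simp [incidenceMatrix, mul_apply, ← ite_and, and_comm]

theorem incidenceMatrix_mul_transpose_eq {B : ι → Finset α} {l : ℕ}
    (hpair : ∀ u w, u ≠ w → #{i | u ∈ B i ∧ w ∈ B i} = l) :
    incidenceMatrix B * (incidenceMatrix B)ᵀ =
      diagonal (fun u => (#{i | u ∈ B i} : ℝ) - l) + (l : ℝ) • vecMulVec 1 1 := by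
  ext u w
  rw [incidenceMatrix_mul_transpose_apply]
  rcases eq_or_ne u w with rfl | huw
  · simp
  · simp [huw, hpair u w huw]

theorem card_le_card_of_forall_pair_count [Fintype α] {B : ι → Finset α} {l : ℕ}
    (hpair : ∀ u w, u ≠ w → #{i | u ∈ B i ∧ w ∈ B i} = l)
    (hrep : ∀ u, l < #{i | u ∈ B i}) :
    Fintype.card α ≤ Fintype.card ι := by
  have hpos : (incidenceMatrix B * (incidenceMatrix B)ᵀ).PosDef := by
    rw [incidenceMatrix_mul_transpose_eq hpair]
    refine PosDef.add_posSemidef (posDef_diagonal_iff.2 fun u => ?_)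
      ((posSemidef_vecMulVec_self_star 1).smul (Nat.cast_nonneg l))
    simpa using hrep u
  calc Fintype.card α = (incidenceMatrix B * (incidenceMatrix B)ᵀ).rank :=
        (rank_of_isUnit _ hpos.isUnit).symm
    _ ≤ (incidenceMatrix B).rank := rank_mul_le_left _ _
    _ ≤ Fintype.card ι := rank_le_card_width _

theorem sum_card_filter_mem_eq_sum_card [Fintype α] (B : ι → Finset α) :
    ∑ u, #{i | u ∈ B i} = ∑ i, #(B i) := by
  simpa [bipartiteAbove, bipartiteBelow] using
    sum_card_bipartiteAbove_eq_sum_card_bipartiteBelow (s := univ) (t := univ)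
      (fun u i => u ∈ B i)

theorem card_filter_mem_mul_eq [Fintype α] {B : ι → Finset α} {k l : ℕ}
    (hB : ∀ i, #(B i) = k) (hpair : ∀ u w, u ≠ w → #{i | u ∈ B i ∧ w ∈ B i} = l) (u : α) :
    #{i | u ∈ B i} * (k - 1) = l * (Fintype.card α - 1) := by
  have hcount := sum_card_bipartiteAbove_eq_sum_card_bipartiteBelow
    (s := univ.erase u) (t := {i | u ∈ B i}) (fun w i => w ∈ B i)
  simp only [bipartiteAbove, bipartiteBelow, filter_filter] at hcount
  calc #{i | u ∈ B i} * (k - 1) = ∑ i with u ∈ B i, #((B i).erase u) := by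
        rw [sum_congr rfl fun i hi => by rw [card_erase_of_mem (mem_filter.1 hi).2, hB],
          sum_const, smul_eq_mul]
    _ = ∑ w ∈ univ.erase u, #{i | u ∈ B i ∧ w ∈ B i} := by
        rw [hcount]
        refine sum_congr rfl fun i _ => congrArg card ?_
        ext w
        simp [and_comm]
    _ = l * (Fintype.card α - 1) := by
        rw [sum_congr rfl fun w hw => hpair u w (ne_of_mem_erase hw).symm, sum_const,
          card_erase_of_mem (mem_univ u), card_univ, smul_eq_mul, mul_comm]

end Incidence

theorem Multiset.countP_eq_card_filter_univ {β : Type*} [DecidableEq β] (m : Multiset β)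
    (p : β → Prop) [DecidablePred p] :
    m.countP p = #{x : m | p x} := by
  conv_lhs => rw [← Multiset.map_univ_coe m]
  rw [Multiset.countP_map, Finset.card_def, filter_val]

theorem stmt_8 (v k l : ℕ) (hl : 0 < l) (hk : 3 ≤ k) (hkv : k < v)
    (𝓑 : Multiset (Finset (Fin v)))
    (hblocks : ∀ b ∈ 𝓑, b.card = k)
    (hdes : ∀ u w : Fin v, u ≠ w → 𝓑.countP (fun b => u ∈ b ∧ w ∈ b) = l) :
    v ≤ Multiset.card 𝓑 ∧ k * (k - 1) ≤ l * (v - 1) := by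
  let B : 𝓑 → Finset (Fin v) := fun b => b
  have hsize (b : 𝓑) : #(B b) = k := hblocks _ Multiset.coe_mem
  have hpair (u w : Fin v) (huw : u ≠ w) : #{b | u ∈ B b ∧ w ∈ B b} = l := by
    rw [← hdes u w huw, Multiset.countP_eq_card_filter_univ]
  have hrep (u : Fin v) : #{b | u ∈ B b} * (k - 1) = l * (v - 1) := by
    simpa using card_filter_mem_mul_eq hsize hpair u
  have hrep_gt (u : Fin v) : l < #{b | u ∈ B b} := by
    refine Nat.lt_of_mul_lt_mul_right (a := k - 1) ?_
    rw [hrep u]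
    exact Nat.mul_lt_mul_of_pos_left (by omega) hl
  have hfisher : v ≤ Multiset.card 𝓑 := by
    simpa using card_le_card_of_forall_pair_count hpair hrep_gt
  refine ⟨hfisher, Nat.le_of_mul_le_mul_left ?_ (by omega : 0 < v)⟩
  calc v * (k * (k - 1)) ≤ Multiset.card 𝓑 * k * (k - 1) := by
        rw [← mul_assoc]
        gcongr
    _ = ∑ u, #{b | u ∈ B b} * (k - 1) := by
        rw [← sum_mul, sum_card_filter_mem_eq_sum_card, sum_congr rfl fun b _ => hsize b]
        simp
    _ = v * (l * (v - 1)) := by simp [hrep]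
end

section
/- For a positive integer m, define f_m(x) = 1 − x/(2m) for 0 ≤ x ≤ m and f_m(x) = (m+1)/(2x+2) for x ≥ m. Then for all real x, y with x ≥ m and 1 ≤ y ≤ x, one has f_m(x−y) − f_m(x) ≥ y(m+1)/(2x(x+1)). -/
/-!
Beyond `m` the function is `(m + 1) / (2x + 2)`, and when `x - y > m` as well the difference
`(m + 1) y / (2 (x - y + 1) (x + 1))` is at least the claimed bound because `x - y + 1 ≤ x`.
When `x - y ≤ m ≤ x`, split the drop at `m` into a linear part of slope `1/(2m)` over
`a = m - (x - y)` and a hyperbolic part over `b = x - m`. The linear slope beats the bound's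
slope `(m + 1)/(2x(x + 1))`; the hyperbolic one may not (if `x < m + 1`), but then `b < 1 ≤ y`
forces `a ≥ m + 1 - x`, and the surplus on `a` pays for the deficit on `b`.
-/

lemma le_div_sub_div_of_one_le {c x y : ℝ} (hc : 0 ≤ c) (hy : 1 ≤ y) (hyx : y ≤ x) :
    y * c / (2 * x * (x + 1)) ≤ c / (2 * (x - y) + 2) - c / (2 * x + 2) := by
  have hx : 0 < x := by linarith
  have hxy : x - y + 1 ≠ 0 := by linarith
  have hsub : c / (2 * (x - y) + 2) - c / (2 * x + 2) = y * c / (2 * (x - y + 1) * (x + 1)) := by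
    field_simp
    ring
  rw [hsub]
  gcongr
  linarith

lemma le_one_sub_div_sub_div_of_one_le {m x y : ℝ} (hm : 0 < m) (hx : m ≤ x) (hy : 1 ≤ y)
    (hxy : x - y ≤ m) :
    y * (m + 1) / (2 * x * (x + 1)) ≤ (1 - (x - y) / (2 * m)) - (m + 1) / (2 * x + 2) := by
  have hx0 : 0 < x := by linarith
  have surplus_covers_deficit : m * (m + 1 - x) ≤ (m - (x - y)) * (x + m + 1) := by
    rcases le_total x (m + 1) with h | h <;> nlinarith
  have hdiff : (1 - (x - y) / (2 * m)) - (m + 1) / (2 * x + 2) - y * (m + 1) / (2 * x * (x + 1))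
      = (x - m) * ((m - (x - y)) * (x + m + 1) - m * (m + 1 - x)) / (2 * m * x * (x + 1)) := by
    field_simp
    ring
  have hnonneg :
      0 ≤ (x - m) * ((m - (x - y)) * (x + m + 1) - m * (m + 1 - x)) / (2 * m * x * (x + 1)) :=
    div_nonneg (mul_nonneg (by linarith) (by linarith)) (by positivity)
  linarith

theorem stmt_12 (m : ℕ) (hm : 0 < m) (f : ℝ → ℝ)
    (hf : ∀ x : ℝ, f x = if x ≤ m then 1 - x / (2 * m) else (m + 1) / (2 * x + 2)) :
    ∀ x y : ℝ, (m : ℝ) ≤ x → 1 ≤ y → y ≤ x →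
      y * (m + 1) / (2 * x * (x + 1)) ≤ f (x - y) - f x := by
  intro x y hx hy hyx
  have hm' : (0 : ℝ) < m := by exact_mod_cast hm
  have hfx : f x = (m + 1) / (2 * x + 2) := by
    rw [hf]
    split_ifs with h
    · obtain rfl : x = m := le_antisymm h hx
      field_simp
      ring
    · rfl
  rw [hfx, hf]
  split_ifs with hxy
  · exact le_one_sub_div_sub_div_of_one_le hm' hx hy hxy
  · exact le_div_sub_div_of_one_le (by positivity) hy hyx
end

section
/- Let m be a positive integer and let G be an edge-weighted complete graph (edges have nonnegative real weights) in which every edge joining two vertices of weight at least m has weight at least 1 (the weight of a vertex is the sum of the weights of its incident edges). Then G contains an m-independent set of size at least ⌈∑_{u∈V(G)} f_m(wt_G(u))⌉, where f_m(x) = 1 − x/(2m) for x ≤ m and f_m(x) = (m+1)/(2x+2) for x ≥ m, and an m-independent set is a set S of vertices such that every vertex of the induced edge-weighted subgraph G[S] has weight strictly less than m. -/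
/-!
Greedy deletion: while some vertex has weight at least `m` in the current vertex set `T`, delete
a heaviest one, `h`, of weight `W ≥ m`. The potential `∑_{u ∈ T} f_m(wt_T u)` does not decrease.
Each remaining `u` loses `w u h`, these losses sum to `W`, and a heavy `u` loses at least `1`
(edge condition) while weighing at most `W` (choice of `h`). Since `f_m` is convex, a loss of `d`
at such `u` raises `f_m(wt_T u)` by at least `d (f_m(W-1) - f_m(W))`, and `f_m(W)` is at most
`W (f_m(W-1) - f_m(W))`. Once no vertex is heavy, the set is `m`-independent and its potential
is at most its size, since `f_m ≤ 1` on `[0, ∞)`.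
-/

open Finset

lemma convexOn_univ_of_forall_exists_support {f : ℝ → ℝ}
    (hf : ∀ y, ∃ g, ∀ t, f y + g * (t - y) ≤ f t) : ConvexOn ℝ Set.univ f := by
  refine convexOn_of_slope_mono_adjacent convex_univ fun {x y z} _ _ hxy hyz => ?_
  obtain ⟨g, hg⟩ := hf y
  have hleft : (f y - f x) / (y - x) ≤ g := by
    rw [div_le_iff₀ (sub_pos.2 hxy)]; linarith [hg x]
  have hright : g ≤ (f z - f y) / (z - y) := by
    rw [le_div_iff₀ (sub_pos.2 hyz)]; linarith [hg z]
  exact hleft.trans hright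

lemma ConvexOn.slope_le_slope_of_le {𝕜 : Type*} [Field 𝕜] [LinearOrder 𝕜] [IsStrictOrderedRing 𝕜]
    {s : Set 𝕜} {f : 𝕜 → 𝕜} (hf : ConvexOn 𝕜 s f) {x y x' y' : 𝕜} (hx : x ∈ s) (hy' : y' ∈ s)
    (hxy : x < y) (hxy' : x' < y') (hxx' : x ≤ x') (hyy' : y ≤ y') :
    slope f x y ≤ slope f x' y' := by
  have hy : y ∈ s := hf.1.ordConnected.out hx hy' ⟨hxy.le, hyy'⟩
  have hx' : x' ∈ s := hf.1.ordConnected.out hx hy' ⟨hxx', hxy'.le⟩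
  calc slope f x y ≤ slope f x y' :=
        hf.slope_mono hx ⟨hy, hxy.ne'⟩ ⟨hy', (hxy.trans_le hyy').ne'⟩ hyy'
    _ = slope f y' x := slope_comm f x y'
    _ ≤ slope f y' x' :=
        hf.slope_mono hy' ⟨hx, (hxy.trans_le hyy').ne⟩ ⟨hx', hxy'.ne⟩ hxx'
    _ = slope f x' y' := slope_comm f y' x'

noncomputable def fm (m x : ℝ) : ℝ := if x ≤ m then 1 - x / (2 * m) else (m + 1) / (2 * x + 2)

section fm

variable {m : ℝ}

lemma fm_of_le {x : ℝ} (hx : x ≤ m) : fm m x = 1 - x / (2 * m) := if_pos hx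

lemma fm_of_ge (hm : 0 < m) {x : ℝ} (hx : m ≤ x) : fm m x = (m + 1) / (2 * x + 2) := by
  unfold fm
  split_ifs with h
  · obtain rfl := le_antisymm h hx
    field_simp; ring
  · rfl

lemma fm_le_one (hm : 0 < m) {x : ℝ} (hx : 0 ≤ x) : fm m x ≤ 1 := by
  rcases le_total x m with h | h
  · have : 0 ≤ x / (2 * m) := by positivity
    rw [fm_of_le h]
    linarith
  · rw [fm_of_ge hm h, div_le_one (by linarith)]; linarith

-- Supporting lines: the line `1 - x/(2m)` itself at points `≤ m`, and the tangents of the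
-- hyperbola `(m+1)/(2x+2)` at points `≥ m`.
lemma convexOn_fm (hm : 0 < m) : ConvexOn ℝ Set.univ (fm m) := by
  refine convexOn_univ_of_forall_exists_support fun y => ?_
  have hline (t : ℝ) : 1 - t / (2 * m) = (2 * m - t) / (2 * m) := by field_simp
  rcases le_total y m with hy | hy
  · refine ⟨-1 / (2 * m), fun t => ?_⟩
    have hsupport : fm m y + -1 / (2 * m) * (t - y) = (2 * m - t) / (2 * m) := by
      rw [fm_of_le hy, ← hline]; ring
    rw [hsupport]
    rcases le_total t m with ht | ht
    · rw [fm_of_le ht, hline]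
    · rw [fm_of_ge hm ht, div_le_div_iff₀ (by positivity) (by linarith)]
      nlinarith [mul_nonneg (sub_nonneg.2 ht) (by linarith : (0:ℝ) ≤ t - m + 1)]
  · have hy1 : 0 < y + 1 := by linarith
    refine ⟨-(m + 1) / (2 * (y + 1) ^ 2), fun t => ?_⟩
    have htangent : fm m y + -(m + 1) / (2 * (y + 1) ^ 2) * (t - y)
        = (m + 1) * (2 * y + 1 - t) / (2 * (y + 1) ^ 2) := by
      rw [fm_of_ge hm hy]; field_simp; ring
    rw [htangent]
    rcases le_total t m with ht | ht
    · rw [fm_of_le ht, hline, div_le_div_iff₀ (by positivity) (by positivity)]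
      nlinarith [mul_nonneg hm.le (sq_nonneg (y - m)),
        mul_nonneg (sub_nonneg.2 ht) (by nlinarith : (0:ℝ) ≤ (y + 1) ^ 2 - m * (m + 1))]
    · rw [fm_of_ge hm ht, div_le_div_iff₀ (by positivity) (by linarith)]
      nlinarith [mul_nonneg (by linarith : (0:ℝ) ≤ m + 1) (sq_nonneg (y - t))]

lemma fm_le_mul_slope (hm : 0 < m) {W : ℝ} (hW : m ≤ W) :
    fm m W ≤ W * (fm m (W - 1) - fm m W) := by
  have hW1pos : 0 < W + 1 := by linarith
  rw [fm_of_ge hm hW]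
  rcases le_total (W - 1) m with hW1 | hW1
  · have hgap : W * (fm m (W - 1) - (m + 1) / (2 * W + 2)) - (m + 1) / (2 * W + 2)
        = (W - m) * (m + 1 - W) / (2 * m) := by
      rw [fm_of_le hW1]; field_simp; ring
    have : 0 ≤ (W - m) * (m + 1 - W) / (2 * m) :=
      div_nonneg (mul_nonneg (by linarith) (by linarith)) (by positivity)
    linarith
  · rw [fm_of_ge hm hW1]
    have hWpos : 0 < W := by linarith
    rw [show 2 * (W - 1) + 2 = 2 * W by ring]
    apply le_of_eq
    field_simp
    ring

lemma fm_gain (hm : 0 < m) {W a d : ℝ} (hW : m ≤ W) (hd : 0 ≤ d)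
    (hheavy : m ≤ a → 1 ≤ d ∧ a ≤ W) :
    d * (fm m (W - 1) - fm m W) ≤ fm m (a - d) - fm m a := by
  rcases hd.eq_or_lt with rfl | hd_pos
  · simp
  have hslope : slope (fm m) (a - d) a ≤ slope (fm m) (W - 1) W := by
    rcases le_or_gt m a with ha | ha
    · obtain ⟨hd1, haW⟩ := hheavy ha
      exact (convexOn_fm hm).slope_le_slope_of_le trivial trivial (by linarith) (by linarith)
        (by linarith) haW
    · calc slope (fm m) (a - d) a = slope (fm m) (m - 1) m := by
            rw [slope_def_field, slope_def_field, fm_of_le ha.le, fm_of_le (x := a - d) (by linarith),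
              fm_of_le (x := m - 1) (by linarith), fm_of_le le_rfl, sub_sub_cancel,
              sub_sub_cancel]
            field_simp
            ring
        _ ≤ slope (fm m) (W - 1) W :=
            (convexOn_fm hm).slope_le_slope_of_le trivial trivial (by linarith) (by linarith)
              (by linarith) hW
  rw [slope_def_field, slope_def_field, sub_sub_cancel, sub_sub_cancel, div_one,
    div_le_iff₀ hd_pos] at hslope
  linarith

lemma fm_le_sum_gain {ι : Type*} (hm : 0 < m) {W : ℝ} (hW : m ≤ W) (s : Finset ι) (a d : ι → ℝ)
    (hsum : ∑ i ∈ s, d i = W) (hd : ∀ i ∈ s, 0 ≤ d i)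
    (hheavy : ∀ i ∈ s, m ≤ a i → 1 ≤ d i ∧ a i ≤ W) :
    fm m W ≤ ∑ i ∈ s, (fm m (a i - d i) - fm m (a i)) :=
  calc fm m W ≤ W * (fm m (W - 1) - fm m W) := fm_le_mul_slope hm hW
    _ = ∑ i ∈ s, d i * (fm m (W - 1) - fm m W) := by rw [← sum_mul, hsum]
    _ ≤ _ := sum_le_sum fun i hi => fm_gain hm hW (hd i hi) (hheavy i hi)

end fm

theorem Finset.exists_potential_le_card {α : Type*} [DecidableEq α] (P : Finset α → ℝ)
    (Good : Finset α → Prop) (hgood : ∀ T, Good T → P T ≤ #T)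
    (hstep : ∀ T, ¬Good T → ∃ x ∈ T, P T ≤ P (T.erase x)) (T : Finset α) :
    ∃ S, Good S ∧ P T ≤ #S := by
  induction T using Finset.strongInduction with
  | H T ih =>
    by_cases hT : Good T
    · exact ⟨T, hT, hgood T hT⟩
    · obtain ⟨x, hx, hPx⟩ := hstep T hT
      obtain ⟨S, hS, hPS⟩ := ih (T.erase x) (erase_ssubset hx)
      exact ⟨S, hS, hPx.trans hPS⟩

section WeightedGraph

variable {V : Type*} [DecidableEq V] (w : V → V → ℝ)

def weightIn (T : Finset V) (u : V) : ℝ := ∑ x ∈ T.erase u, w u x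

noncomputable def fmPotential (m : ℝ) (T : Finset V) : ℝ := ∑ u ∈ T, fm m (weightIn w T u)

variable {w}

lemma weightIn_nonneg (hw : ∀ u x, 0 ≤ w u x) (T : Finset V) (u : V) : 0 ≤ weightIn w T u :=
  sum_nonneg fun x _ => hw u x

lemma weightIn_mono (hw : ∀ u x, 0 ≤ w u x) {S T : Finset V} (hST : S ⊆ T) (u : V) :
    weightIn w S u ≤ weightIn w T u :=
  sum_le_sum_of_subset_of_nonneg (erase_subset_erase u hST) fun x _ _ => hw u x

lemma weightIn_erase {T : Finset V} {u h : V} (hh : h ∈ T) (hu : u ≠ h) :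
    weightIn w (T.erase h) u = weightIn w T u - w u h := by
  rw [weightIn, weightIn, erase_right_comm, eq_sub_iff_add_eq]
  exact sum_erase_add _ _ (mem_erase.2 ⟨hu.symm, hh⟩)

lemma single_le_weightIn (hw : ∀ u x, 0 ≤ w u x) {T : Finset V} {u h : V} (hh : h ∈ T)
    (hu : u ≠ h) : w u h ≤ weightIn w T u :=
  single_le_sum (fun x _ => hw u x) (mem_erase.2 ⟨hu.symm, hh⟩)

lemma sum_weight_erase_eq_weightIn (hsymm : ∀ u x, w u x = w x u) (T : Finset V) (h : V) :
    ∑ u ∈ T.erase h, w u h = weightIn w T h :=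
  sum_congr rfl fun u _ => hsymm u h

lemma fmPotential_le_card {m : ℝ} (hm : 0 < m) (hw : ∀ u x, 0 ≤ w u x) (T : Finset V) :
    fmPotential w m T ≤ #T := by
  rw [fmPotential, card_eq_sum_ones, Nat.cast_sum, Nat.cast_one]
  exact sum_le_sum fun u _ => fm_le_one hm (weightIn_nonneg hw T u)

-- Deleting a heaviest vertex `h` lowers the weight of each `u` by `w u h`; these drops add up to
-- the weight `W` of `h`, and by convexity of `fm m` they raise the potential by at least `fm m W`.
lemma exists_fmPotential_le_erase {m : ℝ} (hm : 0 < m) (hw : ∀ u x, 0 ≤ w u x)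
    (hsymm : ∀ u x, w u x = w x u) {T : Finset V}
    (hedge : ∀ u ∈ T, ∀ x ∈ T, u ≠ x → m ≤ weightIn w T u → m ≤ weightIn w T x → 1 ≤ w u x)
    (hheavy : ∃ u ∈ T, m ≤ weightIn w T u) :
    ∃ h ∈ T, fmPotential w m T ≤ fmPotential w m (T.erase h) := by
  obtain ⟨h, hh, hmax⟩ := exists_max_image (T.filter fun u => m ≤ weightIn w T u)
    (weightIn w T) (by simpa [Finset.Nonempty] using hheavy)
  rw [mem_filter] at hh
  obtain ⟨hhT, hhW⟩ := hh
  refine ⟨h, hhT, ?_⟩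
  have hgain := fm_le_sum_gain hm hhW (T.erase h) (weightIn w T) (fun u => w u h)
    (sum_weight_erase_eq_weightIn hsymm T h) (fun u _ => hw u h) fun u hu hu_heavy =>
      have huT := mem_of_mem_erase hu
      have huh := ne_of_mem_erase hu
      ⟨hedge u huT h hhT huh hu_heavy hhW, hmax u (mem_filter.2 ⟨huT, hu_heavy⟩)⟩
  calc fmPotential w m T
      = ∑ u ∈ T.erase h, fm m (weightIn w T u) + fm m (weightIn w T h) :=
        (sum_erase_add _ _ hhT).symm
    _ ≤ ∑ u ∈ T.erase h, fm m (weightIn w T u - w u h) := by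
        rw [sum_sub_distrib] at hgain; linarith
    _ = fmPotential w m (T.erase h) :=
        sum_congr rfl fun u hu => by rw [weightIn_erase hhT (ne_of_mem_erase hu)]

end WeightedGraph

theorem stmt_14 (m : ℕ) (hm : 0 < m) (f : ℝ → ℝ)
    (hf : ∀ x : ℝ, f x = if x ≤ m then 1 - x / (2 * m) else (m + 1) / (2 * x + 2))
    (V : Type*) [Fintype V] [DecidableEq V]
    (w : V → V → ℝ) (hsymm : ∀ u x : V, w u x = w x u)
    (hnonneg : ∀ u x : V, 0 ≤ w u x)
    (wt : V → ℝ) (hwt : ∀ u : V, wt u = ∑ x ∈ Finset.univ.erase u, w u x)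
    (hedge : ∀ u x : V, u ≠ x → (m : ℝ) ≤ wt u → (m : ℝ) ≤ wt x → 1 ≤ w u x) :
    ∃ S : Finset V,
      (∀ u ∈ S, ∑ x ∈ S.erase u, w u x < m) ∧
      ⌈∑ u : V, f (wt u)⌉ ≤ (S.card : ℤ) := by
  have hm' : (0 : ℝ) < m := Nat.cast_pos.2 hm
  have hwt' (T : Finset V) (u : V) : weightIn w T u ≤ wt u :=
    hwt u ▸ weightIn_mono hnonneg (subset_univ T) u
  obtain ⟨S, hS, hpot⟩ := Finset.exists_potential_le_card (fmPotential w m)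
    (fun S => ∀ u ∈ S, weightIn w S u < m) (fun T _ => fmPotential_le_card hm' hnonneg T)
    (fun T hT => exists_fmPotential_le_erase hm' hnonneg hsymm
      (fun u _ x _ hux hu hx => hedge u x hux (hu.trans (hwt' T u)) (hx.trans (hwt' T x)))
      (by simpa using hT))
    univ
  refine ⟨S, hS, Int.ceil_le.2 ?_⟩
  have hsum : ∑ u, f (wt u) = fmPotential w m univ :=
    sum_congr rfl fun u _ => by rw [hf, hwt]; rfl
  exact_mod_cast hsum ▸ hpot
end

section
/- Let m be a positive integer, G an edge-weighted complete graph in which every edge joining two vertices of weight at least m has weight at least 1, and S a nonempty subset of V(G). Then G[S] contains an m-independent set of size at least ⌈|S|·f_m(x)⌉ where x = (1/|S|)·∑_{u∈S} wt_G(u) and f_m is as defined by f_m(x)=1−x/(2m) for x≤m, f_m(x)=(m+1)/(2x+2) for x≥m. -/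
/-!
`indepFrac μ` is the paper's `f_m` (with `μ = m`) and `wdeg w T v` is `wt_{G[T]}(v)`.

The function `f_μ` is convex and decreasing, so by Jensen
`|S| f_μ(x) ≤ ∑_{u ∈ S} f_μ(wt_G u) ≤ ∑_{u ∈ S} f_μ(wt_{G[S]} u)`, and it suffices to find an
`m`-independent `T ⊆ S` with `∑_{u ∈ S} f_μ(wt_{G[S]} u) ≤ |T|`. Vertices of degree `< μ` in
`G[S]` are kept. The remaining vertices are pairwise joined by edges of weight at least `1`;
among them we repeatedly delete a vertex of maximum degree `D ≥ μ`. By convexity, every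
neighbour's value of `f_μ` rises by at least the edge weight times the slope of `f_μ` on
`[D - 1, D]`, and these gains pay for the deleted vertex.
-/

lemma ConvexOn.slope_le_slope {𝕜 : Type*} [Field 𝕜] [LinearOrder 𝕜] [IsStrictOrderedRing 𝕜]
    {s : Set 𝕜} {f : 𝕜 → 𝕜} (hf : ConvexOn 𝕜 s f) {a b c d : 𝕜} (ha : a ∈ s) (hd : d ∈ s)
    (hab : a < b) (hcd : c < d) (hac : a ≤ c) (hbd : b ≤ d) : slope f a b ≤ slope f c d := by
  have hb : b ∈ s := hf.1.ordConnected.out ha hd ⟨hab.le, hbd⟩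
  have hc : c ∈ s := hf.1.ordConnected.out ha hd ⟨hac, hcd.le⟩
  calc slope f a b ≤ slope f a d :=
        hf.monotoneOn_slope_gt ha ⟨hb, hab⟩ ⟨hd, hab.trans_le hbd⟩ hbd
    _ = slope f d a := slope_comm ..
    _ ≤ slope f d c := hf.monotoneOn_slope_lt hd ⟨ha, (hab.trans_le hbd)⟩ ⟨hc, hcd⟩ hac
    _ = slope f c d := slope_comm ..

open Finset in
lemma ConvexOn.card_mul_map_average_le {ι : Type*} {s : Finset ι} (hs : s.Nonempty)
    {t : Set ℝ} {f : ℝ → ℝ} (hf : ConvexOn ℝ t f) {x : ι → ℝ} (hx : ∀ i ∈ s, x i ∈ t) :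
    #s * f ((∑ i ∈ s, x i) / #s) ≤ ∑ i ∈ s, f (x i) := by
  have hn : (0 : ℝ) < #s := by exact_mod_cast hs.card_pos
  have h := hf.map_sum_le (t := s) (w := fun _ => (#s : ℝ)⁻¹) (fun _ _ => by positivity)
    (by simp [hn.ne']) hx
  simp only [smul_eq_mul, ← mul_sum] at h
  rwa [le_inv_mul_iff₀ hn, inv_mul_eq_div] at h

noncomputable def indepFrac (μ x : ℝ) : ℝ :=
  if x ≤ μ then 1 - x / (2 * μ) else (μ + 1) / (2 * x + 2)

section IndepFrac

open Set

variable {μ : ℝ}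

lemma indepFrac_of_le {x : ℝ} (h : x ≤ μ) : indepFrac μ x = 1 - x / (2 * μ) := if_pos h

lemma indepFrac_of_ge (hμ : 0 < μ) {x : ℝ} (h : μ ≤ x) :
    indepFrac μ x = (μ + 1) / (2 * x + 2) := by
  rcases h.eq_or_lt with rfl | h
  · rw [indepFrac_of_le le_rfl]
    field_simp
    ring
  · exact if_neg h.not_ge

lemma indepFrac_antitone (hμ : 0 < μ) : Antitone (indepFrac μ) := by
  intro x y hxy
  rcases le_total y μ with hy | hy
  · rw [indepFrac_of_le hy, indepFrac_of_le (hxy.trans hy)]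
    gcongr
  rw [indepFrac_of_ge hμ hy]
  rcases le_total x μ with hx | hx
  · rw [indepFrac_of_le hx]
    calc (μ + 1) / (2 * y + 2) ≤ (μ + 1) / (2 * μ + 2) := by gcongr
      _ = 1 - μ / (2 * μ) := by field_simp; ring
      _ ≤ 1 - x / (2 * μ) := by gcongr
  · rw [indepFrac_of_ge hμ hx]
    gcongr
    linarith

/-- Adding `x / (2μ)` makes `f_μ` constant on `(-∞, μ]` and increasing on `[μ, ∞)`. -/
lemma convexOn_indepFrac (hμ : 0 < μ) : ConvexOn ℝ univ (indepFrac μ) := by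
  have hsplit : indepFrac μ = (Iic μ).piecewise (fun _ => 1)
      (fun x => (μ + 1) / (2 * x + 2) + x / (2 * μ)) - fun x => x / (2 * μ) := by
    funext x
    simp only [Pi.sub_apply, piecewise, mem_Iic, indepFrac]
    split_ifs <;> ring
  have hinv : ConvexOn ℝ (Ici μ) fun x => (μ + 1) / (2 * x + 2) := by
    refine ((((convexOn_zpow (𝕜 := ℝ) (-1)).translate_right 1).smul
      (c := (μ + 1) / 2) (by positivity)).subset (fun x (hx : μ ≤ x) => ?_) (convex_Ici μ)).congr
      fun x (hx : μ ≤ x) => ?_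
    · simp only [mem_preimage, mem_Ioi]
      linarith
    · simp only [Function.comp_apply, zpow_neg_one, smul_eq_mul]
      field_simp
      ring
  have hconc : ConcaveOn ℝ univ fun x : ℝ => x / (2 * μ) := by
    simpa [smul_eq_mul, div_eq_inv_mul] using
      (concaveOn_id (convex_univ (𝕜 := ℝ) (E := ℝ))).smul (c := (2 * μ)⁻¹) (by positivity)
  have hconv : ConvexOn ℝ (Ici μ) fun x : ℝ => x / (2 * μ) := by
    simpa [smul_eq_mul, div_eq_inv_mul] using
      (convexOn_id (convex_Ici μ)).smul (c := (2 * μ)⁻¹) (by positivity)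
  rw [hsplit]
  refine (convexOn_univ_piecewise_Iic_of_antitoneOn_Iic_monotoneOn_Ici
    (convexOn_const 1 (convex_Iic μ)) (hinv.add hconv) antitoneOn_const ?_ ?_).sub hconc
  · intro x (hx : μ ≤ x) y (hy : μ ≤ y) hxy
    have : (μ + 1) / (2 * x + 2) - (μ + 1) / (2 * y + 2) ≤ (y - x) / (2 * μ) := by
      have hx1 : 0 < x + 1 := by linarith
      have hy1 : 0 < y + 1 := by linarith
      rw [div_sub_div _ _ (by linarith) (by linarith),
        div_le_div_iff₀ (by nlinarith) (by positivity)]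
      nlinarith [mul_nonneg (sub_nonneg.2 hxy) (by nlinarith : 0 ≤ (x + 1) * (y + 1) - μ * (μ + 1))]
    dsimp only [Pi.add_apply]
    linarith [show (y - x) / (2 * μ) = y / (2 * μ) - x / (2 * μ) by ring]
  · simp only [Pi.add_apply]
    field_simp
    ring

lemma indepFrac_le_one (hμ : 0 < μ) {x : ℝ} (hx : 0 ≤ x) : indepFrac μ x ≤ 1 := by
  simpa [indepFrac_of_le hμ.le] using indepFrac_antitone hμ hx

lemma indepFrac_eq_mul_of_ge (hμ : 0 < μ) {D : ℝ} (hD : μ ≤ D) :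
    indepFrac μ D = D * ((μ + 1) / (2 * D * (D + 1))) := by
  have : 0 < D := hμ.trans_le hD
  rw [indepFrac_of_ge hμ hD]
  field_simp

/-- For `D - 1 ≥ μ` this is an equality; for `D ∈ [μ, μ + 1)` the difference of the two sides,
times `2μD(D + 1)`, is `(D - μ)(μ + 1 - D)(D + 1)`. -/
lemma le_indepFrac_sub_one_sub (hμ : 0 < μ) {D : ℝ} (hD : μ ≤ D) :
    (μ + 1) / (2 * D * (D + 1)) ≤ indepFrac μ (D - 1) - indepFrac μ D := by
  have hD0 : 0 < D := hμ.trans_le hD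
  rw [indepFrac_of_ge hμ hD]
  rcases le_total μ (D - 1) with h | h
  · rw [indepFrac_of_ge hμ h, show 2 * (D - 1) + 2 = 2 * D by ring]
    apply le_of_eq
    field_simp
    ring
  · rw [indepFrac_of_le h, ← sub_nonneg]
    have key : 1 - (D - 1) / (2 * μ) - (μ + 1) / (2 * D + 2) - (μ + 1) / (2 * D * (D + 1))
        = (D - μ) * (μ + 1 - D) * (D + 1) / (2 * μ * D * (D + 1)) := by
      field_simp
      ring
    rw [key]
    exact div_nonneg (mul_nonneg (mul_nonneg (by linarith) (by linarith)) (by linarith))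
      (by positivity)

lemma mul_le_indepFrac_sub (hμ : 0 < μ) {t y D : ℝ} (ht : 1 ≤ t) (hyD : y ≤ D) (hD : μ ≤ D) :
    t * ((μ + 1) / (2 * D * (D + 1))) ≤ indepFrac μ (y - t) - indepFrac μ y := by
  have hslope := (convexOn_indepFrac hμ).slope_le_slope (mem_univ (y - t)) (mem_univ D)
    (by linarith) (by linarith : D - 1 < D) (by linarith) hyD
  rw [slope_def_field, slope_def_field, sub_sub_cancel, sub_sub_cancel, div_one,
    div_le_iff₀ (by linarith)] at hslope
  nlinarith [le_indepFrac_sub_one_sub hμ hD]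

end IndepFrac

section WeightedDegree

open Finset

variable {V : Type*} [DecidableEq V]

def wdeg (w : V → V → ℝ) (T : Finset V) (v : V) : ℝ := ∑ x ∈ T.erase v, w v x

variable {w : V → V → ℝ}

lemma wdeg_nonneg (hw : ∀ u x, 0 ≤ w u x) (T : Finset V) (v : V) : 0 ≤ wdeg w T v :=
  sum_nonneg fun x _ => hw v x

lemma wdeg_mono (hw : ∀ u x, 0 ≤ w u x) {S T : Finset V} (hST : S ⊆ T) (v : V) :
    wdeg w S v ≤ wdeg w T v :=
  sum_le_sum_of_subset_of_nonneg (erase_subset_erase v hST) fun x _ _ => hw v x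

lemma wdeg_erase_add {T : Finset V} {u v : V} (hu : u ∈ T) (hvu : v ≠ u) :
    wdeg w (T.erase u) v + w v u = wdeg w T v := by
  rw [wdeg, erase_right_comm, sum_erase_add _ _ (mem_erase.2 ⟨hvu.symm, hu⟩), wdeg]

lemma wdeg_union {A B : Finset V} (hAB : Disjoint A B) {v : V} (hv : v ∉ B) :
    wdeg w (A ∪ B) v = wdeg w A v + ∑ x ∈ B, w v x := by
  rw [wdeg, wdeg, erase_union_distrib, erase_eq_of_notMem hv,
    sum_union (hAB.mono_left (erase_subset v A))]

lemma sum_weight_erase_eq_wdeg (hsymm : ∀ u x, w u x = w x u) (T : Finset V) (u : V) :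
    ∑ v ∈ T.erase u, w v u = wdeg w T u :=
  sum_congr rfl fun v _ => hsymm v u

variable {μ : ℝ} {a : V → ℝ}

/-- With an external load `a v` added to every degree, deleting a vertex `u` of maximum degree
`D ≥ μ` costs `f_μ(D) = D r` with `r = (μ + 1) / (2D(D + 1))`, while every other `v` gains at
least `w v u * r`; the edges at `u` carry `D - a u` of its degree, so only
`a u * r ≤ a u / (2μ)` is lost. -/
lemma sum_indepFrac_le_erase_of_isMax (hμ : 0 < μ) (hsymm : ∀ u x, w u x = w x u)
    {B : Finset V} {u : V} (hu : u ∈ B) (hau : 0 ≤ a u)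
    (hmax : ∀ v ∈ B, a v + wdeg w B v ≤ a u + wdeg w B u) (hheavy : μ ≤ a u + wdeg w B u)
    (hw : ∀ v ∈ B, v ≠ u → 1 ≤ w v u) :
    ∑ v ∈ B, indepFrac μ (a v + wdeg w B v) ≤
      a u / (2 * μ) + ∑ v ∈ B.erase u, indepFrac μ (a v + wdeg w (B.erase u) v) := by
  set D := a u + wdeg w B u
  set r := (μ + 1) / (2 * D * (D + 1))
  have hgain : ∀ v ∈ B.erase u, indepFrac μ (a v + wdeg w B v) ≤
      indepFrac μ (a v + wdeg w (B.erase u) v) - w v u * r := by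
    intro v hv
    obtain ⟨hvu, hvB⟩ := mem_erase.1 hv
    have hdel : a v + wdeg w B v - w v u = a v + wdeg w (B.erase u) v := by
      rw [← wdeg_erase_add hu hvu]
      ring
    have := mul_le_indepFrac_sub hμ (hw v hvB hvu) (hmax v hvB) hheavy
    rw [hdel] at this
    linarith
  have hr : r ≤ 1 / (2 * μ) := by
    have hD : 0 < D := hμ.trans_le hheavy
    rw [div_le_div_iff₀ (by positivity) (by positivity)]
    nlinarith
  calc ∑ v ∈ B, indepFrac μ (a v + wdeg w B v)
      = indepFrac μ D + ∑ v ∈ B.erase u, indepFrac μ (a v + wdeg w B v) :=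
        (add_sum_erase B _ hu).symm
    _ ≤ D * r + ∑ v ∈ B.erase u, (indepFrac μ (a v + wdeg w (B.erase u) v) - w v u * r) := by
        rw [indepFrac_eq_mul_of_ge hμ hheavy]
        gcongr with v hv
        exact hgain v hv
    _ = a u * r + ∑ v ∈ B.erase u, indepFrac μ (a v + wdeg w (B.erase u) v) := by
        rw [sum_sub_distrib, ← sum_mul, sum_weight_erase_eq_wdeg hsymm]
        ring
    _ ≤ a u / (2 * μ) + ∑ v ∈ B.erase u, indepFrac μ (a v + wdeg w (B.erase u) v) := by
        gcongr
        calc a u * r ≤ a u * (1 / (2 * μ)) := by gcongr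
          _ = a u / (2 * μ) := by ring

lemma exists_indep_subset_of_one_le_weight (hμ : 0 < μ) (hsymm : ∀ u x, w u x = w x u)
    (hnonneg : ∀ u x, 0 ≤ w u x) (B : Finset V) (ha : ∀ v ∈ B, 0 ≤ a v)
    (hB : ∀ u ∈ B, ∀ v ∈ B, u ≠ v → 1 ≤ w u v) :
    ∃ T ⊆ B, (∀ v ∈ T, a v + wdeg w T v < μ) ∧
      ∑ v ∈ B, indepFrac μ (a v + wdeg w B v) ≤ (∑ v ∈ B, a v) / (2 * μ) + #T := by
  induction B using Finset.strongInduction with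
  | H B ih =>
    by_cases hheavy : ∃ v ∈ B, μ ≤ a v + wdeg w B v
    · obtain ⟨v₀, hv₀, hv₀μ⟩ := hheavy
      obtain ⟨u, hu, hmax⟩ := B.exists_max_image (fun v => a v + wdeg w B v) ⟨v₀, hv₀⟩
      obtain ⟨T, hTB, hTind, hTsum⟩ := ih (B.erase u) (erase_ssubset hu)
        (fun v hv => ha v (mem_of_mem_erase hv))
        (fun x hx y hy => hB x (mem_of_mem_erase hx) y (mem_of_mem_erase hy))
      refine ⟨T, hTB.trans (erase_subset u B), hTind, ?_⟩
      have hstep := sum_indepFrac_le_erase_of_isMax hμ hsymm hu (ha u hu) hmax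
        (hv₀μ.trans (hmax v₀ hv₀)) fun v hv hvu => hB v hv u hu hvu
      rw [← add_sum_erase B a hu, add_div]
      linarith
    · push Not at hheavy
      refine ⟨B, subset_rfl, hheavy, ?_⟩
      calc ∑ v ∈ B, indepFrac μ (a v + wdeg w B v)
          ≤ ∑ v ∈ B, (1 : ℝ) := sum_le_sum fun v hv =>
            indepFrac_le_one hμ (add_nonneg (ha v hv) (wdeg_nonneg hnonneg B v))
        _ ≤ (∑ v ∈ B, a v) / (2 * μ) + #B := by
          rw [sum_const, nsmul_one, le_add_iff_nonneg_left]
          exact div_nonneg (sum_nonneg ha) (by positivity)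

/-- Light vertices (weighted degree `< μ` in `S`) are all kept; their edges into the heavy part
become external loads `a` for the greedy deletion inside the heavy part. -/
lemma exists_indep_subset_sum_indepFrac_le (hμ : 0 < μ) (hsymm : ∀ u x, w u x = w x u)
    (hnonneg : ∀ u x, 0 ≤ w u x) (S : Finset V)
    (hS : ∀ u ∈ S, ∀ x ∈ S, u ≠ x → μ ≤ wdeg w S u → μ ≤ wdeg w S x → 1 ≤ w u x) :
    ∃ T ⊆ S, (∀ v ∈ T, wdeg w T v < μ) ∧ ∑ u ∈ S, indepFrac μ (wdeg w S u) ≤ #T := by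
  set H := S.filter fun u => μ ≤ wdeg w S u
  set L := S.filter fun u => ¬μ ≤ wdeg w S u
  have hHL : Disjoint H L := disjoint_filter_filter_not S S _
  have hHLS : H ∪ L = S := filter_union_filter_not_eq _ S
  set a : V → ℝ := fun v => ∑ x ∈ L, w v x
  obtain ⟨TH, hTH, hTHind, hTHsum⟩ :=
    exists_indep_subset_of_one_le_weight (a := a) hμ hsymm hnonneg H
      (fun v _ => sum_nonneg fun x _ => hnonneg v x) fun u hu x hx hux =>
        hS u (mem_filter.1 hu).1 x (mem_filter.1 hx).1 hux (mem_filter.1 hu).2 (mem_filter.1 hx).2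
  have hTHL : Disjoint TH L := hHL.mono_left hTH
  have hwdegH : ∀ v ∈ H, wdeg w S v = a v + wdeg w H v := fun v hv => by
    rw [← hHLS, wdeg_union hHL (disjoint_left.1 hHL hv), add_comm]
  have hlight : ∀ u ∈ L, indepFrac μ (wdeg w S u) ≤ 1 - (∑ x ∈ H, w u x) / (2 * μ) := by
    intro u hu
    have hlt := not_le.1 (mem_filter.1 hu).2
    have hHu : ∑ x ∈ H, w u x ≤ wdeg w S u := by
      rw [← hHLS, union_comm, wdeg_union hHL.symm (disjoint_right.1 hHL hu)]
      linarith [wdeg_nonneg hnonneg L u]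
    rw [indepFrac_of_le hlt.le]
    gcongr
  have hswap : ∑ u ∈ L, ∑ x ∈ H, w u x = ∑ v ∈ H, a v := by
    rw [sum_comm]
    exact sum_congr rfl fun v _ => sum_congr rfl fun u _ => hsymm u v
  refine ⟨TH ∪ L, union_subset (hTH.trans (filter_subset _ S)) (filter_subset _ S), ?_, ?_⟩
  · intro v hv
    rcases mem_union.1 hv with hvTH | hvL
    · rw [wdeg_union hTHL (disjoint_left.1 hTHL hvTH), add_comm]
      exact hTHind v hvTH
    · calc wdeg w (TH ∪ L) v ≤ wdeg w S v :=
            wdeg_mono hnonneg (union_subset (hTH.trans (filter_subset _ S)) (filter_subset _ S)) v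
        _ < μ := not_le.1 (mem_filter.1 hvL).2
  · have hsplit := sum_union hHL (f := fun u => indepFrac μ (wdeg w S u))
    rw [hHLS] at hsplit
    calc ∑ u ∈ S, indepFrac μ (wdeg w S u)
        = ∑ v ∈ H, indepFrac μ (a v + wdeg w H v) + ∑ u ∈ L, indepFrac μ (wdeg w S u) := by
          rw [hsplit, sum_congr rfl fun v hv => congrArg (indepFrac μ) (hwdegH v hv)]
      _ ≤ ((∑ v ∈ H, a v) / (2 * μ) + #TH) + ∑ u ∈ L, (1 - (∑ x ∈ H, w u x) / (2 * μ)) :=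
          add_le_add hTHsum (sum_le_sum hlight)
      _ = #(TH ∪ L) := by
          rw [sum_sub_distrib, ← sum_div, hswap, card_union_of_disjoint hTHL]
          push_cast
          simp only [sum_const, nsmul_one]
          ring

end WeightedDegree

open Finset in
theorem stmt_15 (m : ℕ) (hm : 0 < m) (f : ℝ → ℝ)
    (hf : ∀ x : ℝ, f x = if x ≤ m then 1 - x / (2 * m) else (m + 1) / (2 * x + 2))
    (V : Type*) [Fintype V] [DecidableEq V]
    (w : V → V → ℝ) (hsymm : ∀ u x : V, w u x = w x u)
    (hnonneg : ∀ u x : V, 0 ≤ w u x)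
    (wt : V → ℝ) (hwt : ∀ u : V, wt u = ∑ x ∈ Finset.univ.erase u, w u x)
    (hedge : ∀ u x : V, u ≠ x → (m : ℝ) ≤ wt u → (m : ℝ) ≤ wt x → 1 ≤ w u x)
    (S : Finset V) (hS : S.Nonempty) :
    ∃ T : Finset V, T ⊆ S ∧
      (∀ u ∈ T, ∑ x ∈ T.erase u, w u x < m) ∧
      ⌈(S.card : ℝ) * f ((∑ u ∈ S, wt u) / S.card)⌉ ≤ (T.card : ℤ) := by
  have hμ : (0 : ℝ) < m := by exact_mod_cast hm
  obtain rfl : f = indepFrac m := funext hf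
  obtain rfl : wt = wdeg w univ := funext hwt
  have hSuniv : ∀ u, wdeg w S u ≤ wdeg w univ u := wdeg_mono hnonneg (subset_univ S)
  obtain ⟨T, hTS, hTind, hT⟩ := exists_indep_subset_sum_indepFrac_le hμ hsymm hnonneg S
    fun u _ x _ hux hu hx => hedge u x hux (hu.trans (hSuniv u)) (hx.trans (hSuniv x))
  refine ⟨T, hTS, hTind, Int.ceil_le.2 ?_⟩
  push_cast
  calc #S * indepFrac m ((∑ u ∈ S, wdeg w univ u) / #S)
      ≤ ∑ u ∈ S, indepFrac m (wdeg w univ u) :=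
        (convexOn_indepFrac hμ).card_mul_map_average_le hS fun _ _ => Set.mem_univ _
    _ ≤ ∑ u ∈ S, indepFrac m (wdeg w S u) :=
        sum_le_sum fun u _ => indepFrac_antitone hμ (hSuniv u)
    _ ≤ #T := hT
end

section
/- If an affine plane of order q exists (i.e., a (q²,q,1)-design) and s is a positive integer, then there exists an (sq², sq, 1)-covering with exactly q² + q blocks; in particular C(sq², sq) ≤ q² + q. -/
/-!
Replacing every point of an affine plane by `s` copies keeps its `q² + q` blocks, turns
each block `A` into `A × [s]` of size `s q`, and every pair of new points is covered: if
their underlying points differ they share the unique line through them, and if they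
coincide any line through that point will do. That the plane has exactly `q² + q` blocks is
the usual double count of incident (ordered pair, block) triples.
-/

open Finset

theorem Multiset.sum_countP_eq_sum_map_card_filter_s16 {α β : Type*} (m : Multiset α)
    (P : Finset β) (r : β → α → Prop) [∀ p a, Decidable (r p a)] :
    ∑ p ∈ P, m.countP (r p) = (m.map fun a => #{p ∈ P | r p a}).sum := by
  induction m using Multiset.induction with
  | empty => simp
  | cons a m ih =>
    simp only [Multiset.countP_cons, Multiset.map_cons, Multiset.sum_cons, sum_add_distrib, ih,
      card_filter]
    rw [add_comm]

section Designs

variable {α : Type*}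

theorem Multiset.card_mul_eq_of_countP_pair_eq [Fintype α] [DecidableEq α]
    (𝓐 : Multiset (Finset α)) (k c : ℕ) (hcard : ∀ b ∈ 𝓐, #b = k)
    (hpair : ∀ u w : α, u ≠ w → 𝓐.countP (fun b => u ∈ b ∧ w ∈ b) = c) :
    Multiset.card 𝓐 * (k * (k - 1)) = c * (Fintype.card α * (Fintype.card α - 1)) := by
  have hcount := Multiset.sum_countP_eq_sum_map_card_filter_s16 𝓐 (univ : Finset α).offDiag
    fun p b => p.1 ∈ b ∧ p.2 ∈ b
  have hpairs :
      ∀ b ∈ 𝓐, #{p ∈ (univ : Finset α).offDiag | p.1 ∈ b ∧ p.2 ∈ b} = k * (k - 1) := by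
    intro b hb
    have : {p ∈ (univ : Finset α).offDiag | p.1 ∈ b ∧ p.2 ∈ b} = b.offDiag := by
      ext p
      simp [mem_offDiag, and_comm, and_left_comm]
    rw [this, offDiag_card, hcard b hb, Nat.mul_sub_one]
  rw [sum_congr rfl fun p hp => hpair p.1 p.2 (mem_offDiag.1 hp).2.2,
    Multiset.map_congr rfl hpairs, Multiset.map_const', Multiset.sum_replicate, sum_const,
    offDiag_card, card_univ] at hcount
  rw [← smul_eq_mul, ← hcount, smul_eq_mul, Nat.mul_sub_one, mul_comm]

theorem Multiset.card_eq_of_affinePlane [Fintype α] [DecidableEq α] (q : ℕ) (hq : 2 ≤ q)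
    (𝓐 : Multiset (Finset α)) (hα : Fintype.card α = q ^ 2) (hcard : ∀ b ∈ 𝓐, #b = q)
    (hpair : ∀ u w : α, u ≠ w → 𝓐.countP (fun b => u ∈ b ∧ w ∈ b) = 1) :
    Multiset.card 𝓐 = q ^ 2 + q := by
  have hcount := 𝓐.card_mul_eq_of_countP_pair_eq q 1 hcard hpair
  have hplane : (q ^ 2 + q) * (q * (q - 1)) = q ^ 2 * (q ^ 2 - 1) := by
    have : 1 ≤ q ^ 2 := Nat.one_le_pow _ _ (by omega)
    zify [show 1 ≤ q by omega, this]
    ring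
  refine Nat.eq_of_mul_eq_mul_right (m := q * (q - 1)) (Nat.mul_pos (by omega) (by omega)) ?_
  rw [hcount, hα, hplane, one_mul]

def CoversAllPairs (𝓐 : Multiset (Finset α)) : Prop :=
  ∀ u w : α, ∃ b ∈ 𝓐, u ∈ b ∧ w ∈ b

theorem coversAllPairs_of_countP_pair_pos [DecidableEq α] [Nontrivial α]
    (𝓐 : Multiset (Finset α))
    (hpair : ∀ u w : α, u ≠ w → 0 < 𝓐.countP (fun b => u ∈ b ∧ w ∈ b)) :
    CoversAllPairs 𝓐 := by
  intro u w
  obtain ⟨v, hv⟩ := exists_ne u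
  by_cases huw : u = w
  · subst huw
    obtain ⟨b, hb, hu, -⟩ := Multiset.countP_pos.1 (hpair u v hv.symm)
    exact ⟨b, hb, hu, hu⟩
  · exact Multiset.countP_pos.1 (hpair u w huw)

theorem CoversAllPairs.blowup {𝓐 : Multiset (Finset α)} (h : CoversAllPairs 𝓐) (β : Type*)
    [Fintype β] :
    CoversAllPairs (𝓐.map fun A => (univ : Finset β) ×ˢ A) := by
  intro x y
  obtain ⟨A, hA, hx, hy⟩ := h x.2 y.2
  exact ⟨_, Multiset.mem_map_of_mem _ hA, by simp [hx], by simp [hy]⟩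

theorem CoversAllPairs.map_equiv {γ : Type*} {𝓐 : Multiset (Finset α)} (h : CoversAllPairs 𝓐)
    (e : α ≃ γ) : CoversAllPairs (𝓐.map (Finset.map e.toEmbedding)) := by
  intro x y
  obtain ⟨A, hA, hx, hy⟩ := h (e.symm x) (e.symm y)
  exact ⟨_, Multiset.mem_map_of_mem _ hA, by simpa [mem_map_equiv] using hx,
    by simpa [mem_map_equiv] using hy⟩

end Designs

theorem stmt_16_general (q s : ℕ) (hq : 0 < q)
    (𝓐 : Multiset (Finset (Fin (q ^ 2))))
    (hAblocks : ∀ b ∈ 𝓐, b.card = q)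
    (hAdes : ∀ u w : Fin (q ^ 2), u ≠ w → 𝓐.countP (fun b => u ∈ b ∧ w ∈ b) = 1) :
    ∃ 𝓑 : Multiset (Finset (Fin (s * q ^ 2))),
      (∀ b ∈ 𝓑, b.card = s * q) ∧
      (∀ u w : Fin (s * q ^ 2), u ≠ w → 1 ≤ 𝓑.countP (fun b => u ∈ b ∧ w ∈ b)) ∧
      Multiset.card 𝓑 = q ^ 2 + q := by
  obtain rfl | hq2 : q = 1 ∨ 2 ≤ q := by omega
  · -- on one point the design axioms are vacuous, so `𝓐` may have any size
    exact ⟨Multiset.replicate 2 univ, by simp, fun u w _ => by simp, by simp⟩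
  have : Nontrivial (Fin (q ^ 2)) := Fin.nontrivial_iff_two_le.2 (by nlinarith)
  have hcover : CoversAllPairs 𝓐 :=
    coversAllPairs_of_countP_pair_pos 𝓐 fun u w huw => by rw [hAdes u w huw]; exact one_pos
  refine ⟨(𝓐.map fun A => (univ : Finset (Fin s)) ×ˢ A).map
      (Finset.map finProdFinEquiv.toEmbedding), ?_,
    fun u w _ => Multiset.countP_pos.2 (((hcover.blowup (Fin s)).map_equiv _) u w), ?_⟩
  · simp only [Multiset.map_map, Function.comp_apply, Multiset.mem_map]
    rintro _ ⟨A, hA, rfl⟩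
    rw [card_map, card_product, card_univ, Fintype.card_fin, hAblocks A hA]
  · rw [Multiset.card_map, Multiset.card_map,
      Multiset.card_eq_of_affinePlane q hq2 𝓐 (Fintype.card_fin _) hAblocks hAdes]

theorem stmt_16 (q s : ℕ) (hq : 0 < q) (hs : 0 < s)
    (𝓐 : Multiset (Finset (Fin (q ^ 2))))
    (hAblocks : ∀ b ∈ 𝓐, b.card = q)
    (hAdes : ∀ u w : Fin (q ^ 2), u ≠ w → 𝓐.countP (fun b => u ∈ b ∧ w ∈ b) = 1) :
    ∃ 𝓑 : Multiset (Finset (Fin (s * q ^ 2))),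
      (∀ b ∈ 𝓑, b.card = s * q) ∧
      (∀ u w : Fin (s * q ^ 2), u ≠ w → 1 ≤ 𝓑.countP (fun b => u ∈ b ∧ w ∈ b)) ∧
      Multiset.card 𝓑 = q ^ 2 + q :=
  stmt_16_general q s hq 𝓐 hAblocks hAdes
end

section
/- Let D be a (v,k,λ)-covering with b blocks, let r, d be the integers with λ(v−1) = r(k−1) − d and 0 ≤ d < k−1, and set a = bk − rv. Then the excess multigraph G of D satisfies ∑_{u} deg_G(u) = dv + a(k−1), and the number of points u with r_D(u) > r (equivalently deg_G(u) ≥ d + (k−1)) is at most a. -/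
open Finset

theorem stmt_18 (v k l r d : ℕ) (hl : 0 < l) (hk : 3 ≤ k) (hkv : k < v)
    (hrd : l * (v - 1) + d = r * (k - 1)) (hd : d < k - 1)
    (𝓑 : Multiset (Finset (Fin v)))
    (hblocks : ∀ b ∈ 𝓑, b.card = k)
    (hcov : ∀ u w : Fin v, u ≠ w → l ≤ 𝓑.countP (fun b => u ∈ b ∧ w ∈ b))
    (a : ℤ) (ha : a = (Multiset.card 𝓑 : ℤ) * k - r * v) :
    (∑ u : Fin v, ∑ w ∈ Finset.univ.erase u,
        ((𝓑.countP (fun b => u ∈ b ∧ w ∈ b) : ℤ) - l)) = d * v + a * (k - 1) ∧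
    ((Finset.univ.filter
        (fun u : Fin v => r < 𝓑.countP (fun b => u ∈ b))).card : ℤ) ≤ a := by
  have hv : 4 ≤ v := by omega
  -- Lemma A: row sums
  have hA : ∀ s : Multiset (Finset (Fin v)), (∀ b ∈ s, b.card = k) →
      ∀ u : Fin v, ∑ w ∈ Finset.univ.erase u, s.countP (fun b => u ∈ b ∧ w ∈ b)
        = s.countP (fun b => u ∈ b) * (k - 1) := by
    intro s
    induction s using Multiset.induction with
    | empty => intro _ u; simp
    | cons b t ih =>
      intro hb u
      have hbk : b.card = k := hb b (Multiset.mem_cons_self _ _)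
      have ht : ∀ x ∈ t, x.card = k := fun x hx => hb x (Multiset.mem_cons_of_mem hx)
      simp only [Multiset.countP_cons]
      rw [Finset.sum_add_distrib, ih ht u, add_mul]
      congr 1
      by_cases hub : u ∈ b
      · have : ∀ w ∈ Finset.univ.erase u, (if u ∈ b ∧ w ∈ b then 1 else 0)
            = (if w ∈ b.erase u then 1 else 0) := by
          intro w hw
          have hwu : w ≠ u := (Finset.mem_erase.mp hw).1
          simp [Finset.mem_erase, hwu, hub]
        rw [Finset.sum_congr rfl this, Finset.sum_ite_mem]
        have : Finset.univ.erase u ∩ b.erase u = b.erase u := by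
          apply Finset.inter_eq_right.mpr
          intro x hx
          simp [Finset.mem_erase.mp hx]
        rw [this]
        simp [Finset.card_erase_of_mem hub, hbk, hub]
      · simp [hub]
  -- Lemma B: total sum
  have hB : ∀ s : Multiset (Finset (Fin v)), (∀ b ∈ s, b.card = k) →
      ∑ u : Fin v, s.countP (fun b => u ∈ b) = Multiset.card s * k := by
    intro s
    induction s using Multiset.induction with
    | empty => intro _; simp
    | cons b t ih =>
      intro hb
      have hbk : b.card = k := hb b (Multiset.mem_cons_self _ _)
      have ht : ∀ x ∈ t, x.card = k := fun x hx => hb x (Multiset.mem_cons_of_mem hx)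
      simp only [Multiset.countP_cons, Multiset.card_cons]
      rw [Finset.sum_add_distrib, ih ht]
      have : ∑ u : Fin v, (if u ∈ b then 1 else 0) = b.card := by
        rw [Finset.sum_ite_mem, Finset.univ_inter]; simp
      rw [this, hbk]; ring
  -- Lemma C: r ≤ r_u
  have hC : ∀ u : Fin v, r ≤ 𝓑.countP (fun b => u ∈ b) := by
    intro u
    set ru := 𝓑.countP (fun b => u ∈ b) with hru
    have hlow : l * (v - 1) ≤ ru * (k - 1) := by
      rw [← hA 𝓑 hblocks u]
      calc l * (v - 1) = ∑ _w ∈ Finset.univ.erase u, l := by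
            rw [Finset.sum_const, Finset.card_erase_of_mem (Finset.mem_univ u)]
            simp [mul_comm]
        _ ≤ _ := Finset.sum_le_sum (fun w hw => hcov u w (Ne.symm (Finset.mem_erase.mp hw).1))
    by_contra h
    push_neg at h
    have h1 : ru + 1 ≤ r := h
    have h2 : (ru + 1) * (k - 1) ≤ r * (k - 1) := Nat.mul_le_mul_right _ h1
    have h3 : 1 ≤ k - 1 := by omega
    nlinarith [hrd]
  -- first part
  have hrow : ∀ u : Fin v, ∑ w ∈ Finset.univ.erase u,
      ((𝓑.countP (fun b => u ∈ b ∧ w ∈ b) : ℤ) - l)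
      = (𝓑.countP (fun b => u ∈ b) : ℤ) * (k - 1) - l * (v - 1) := by
    intro u
    rw [Finset.sum_sub_distrib, Finset.sum_const,
      Finset.card_erase_of_mem (Finset.mem_univ u)]
    have := hA 𝓑 hblocks u
    have hcast : (∑ w ∈ Finset.univ.erase u,
        (𝓑.countP (fun b => u ∈ b ∧ w ∈ b) : ℤ))
        = (𝓑.countP (fun b => u ∈ b) : ℤ) * (k - 1) := by
      rw [← Nat.cast_sum, this, Nat.cast_mul]
      congr 1
      omega
    rw [hcast]
    simp only [Finset.card_univ, Fintype.card_fin, nsmul_eq_mul]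
    have : ((v - 1 : ℕ) : ℤ) = (v : ℤ) - 1 := by omega
    rw [this]; ring
  have hBi : (∑ u : Fin v, (𝓑.countP (fun b => u ∈ b) : ℤ))
      = (Multiset.card 𝓑 : ℤ) * k := by
    rw [← Nat.cast_sum, hB 𝓑 hblocks]; push_cast; ring
  have hrdZ : (l : ℤ) * ((v : ℤ) - 1) + d = r * ((k : ℤ) - 1) := by
    have h1 : ((v - 1 : ℕ) : ℤ) = (v : ℤ) - 1 := by omega
    have h2 : ((k - 1 : ℕ) : ℤ) = (k : ℤ) - 1 := by omega
    have := congrArg (fun n : ℕ => (n : ℤ)) hrd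
    push_cast at this
    rw [h1, h2] at this
    linarith
  constructor
  · rw [Finset.sum_congr rfl (fun u _ => hrow u), Finset.sum_sub_distrib,
      ← Finset.sum_mul, hBi, Finset.sum_const]
    simp only [Finset.card_univ, Fintype.card_fin, nsmul_eq_mul]
    rw [ha]
    linear_combination (-(v : ℤ)) * hrdZ
  · rw [ha, ← hBi]
    have h1 : ((Finset.univ.filter
        (fun u : Fin v => r < 𝓑.countP (fun b => u ∈ b))).card : ℤ)
        = ∑ u ∈ Finset.univ.filter (fun u : Fin v => r < 𝓑.countP (fun b => u ∈ b)), 1 := by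
      simp
    rw [h1]
    have h2 : ∑ u ∈ Finset.univ.filter (fun u : Fin v => r < 𝓑.countP (fun b => u ∈ b)), (1 : ℤ)
        ≤ ∑ u ∈ Finset.univ.filter (fun u : Fin v => r < 𝓑.countP (fun b => u ∈ b)),
          ((𝓑.countP (fun b => u ∈ b) : ℤ) - r) := by
      apply Finset.sum_le_sum
      intro u hu
      have := (Finset.mem_filter.mp hu).2
      omega
    have h3 : ∑ u ∈ Finset.univ.filter (fun u : Fin v => r < 𝓑.countP (fun b => u ∈ b)),
          ((𝓑.countP (fun b => u ∈ b) : ℤ) - r)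
        ≤ ∑ u : Fin v, ((𝓑.countP (fun b => u ∈ b) : ℤ) - r) := by
      apply Finset.sum_le_sum_of_subset_of_nonneg (Finset.filter_subset _ _)
      intro u _ _
      have := hC u
      omega
    have h4 : ∑ u : Fin v, ((𝓑.countP (fun b => u ∈ b) : ℤ) - r)
        = (∑ u : Fin v, (𝓑.countP (fun b => u ∈ b) : ℤ)) - r * v := by
      rw [Finset.sum_sub_distrib, Finset.sum_const]
      simp [mul_comm]
    linarith
end

section
/- Let v, k, λ be positive integers with 3 ≤ k < v and let r = ⌈λ(v−1)/(k−1)⌉. Suppose that every (v,k,λ)-covering D has at least α·|V₀(D)| + β·|V₁(D)| blocks, where α, β are nonnegative reals with α ≥ 2β, V₀(D) is the set of points lying in exactly r blocks and V₁(D) the set of points lying in exactly r+1 blocks. Then every (v,k,λ)-covering has at least (rv(α−β) + αv)/(k(α−β) + 1) blocks. -/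
/-!
Counting the pairs through a point shows that every point of a covering lies in at least `r`
blocks, so the excess `a = bk - rv` is the sum of the nonnegative excesses of the points. A point
of excess `1` lies in `V₁`, a point of excess `0` in `V₀`, and every other point has excess at
least `2`; hence `|V₁| ≤ a` and `2v ≤ a + 2|V₀| + |V₁|`. Fed into the hypothesis these give
`b ≥ αv - (α - β)a = αv - (α - β)(bk - rv)`, which is solved for `b`.
-/

open Finset

section Covering

variable {α : Type*} [Fintype α] [DecidableEq α]

def replication (D : Multiset (Finset α)) (u : α) : ℕ := D.countP (u ∈ ·)

structure IsCovering (k l : ℕ) (D : Multiset (Finset α)) : Prop where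
  card_eq : ∀ b ∈ D, b.card = k
  le_countP_pair : ∀ u w, u ≠ w → l ≤ D.countP (fun b => u ∈ b ∧ w ∈ b)

theorem sum_replication (D : Multiset (Finset α)) :
    ∑ u, replication D u = (D.map card).sum := by
  induction D using Multiset.induction_on with
  | empty => simp [replication]
  | cons a s ih =>
    simp only [replication, Multiset.countP_cons, sum_add_distrib, Multiset.map_cons,
      Multiset.sum_cons] at ih ⊢
    rw [ih, sum_boole, filter_mem_eq_inter, univ_inter, Nat.cast_id, add_comm]

theorem sum_replication_of_card_eq {k : ℕ} {D : Multiset (Finset α)}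
    (hD : ∀ b ∈ D, b.card = k) : ∑ u, replication D u = Multiset.card D * k := by
  rw [sum_replication, Multiset.map_congr rfl hD, Multiset.map_const', Multiset.sum_replicate,
    smul_eq_mul]

theorem sum_erase_countP_pair {k : ℕ} {D : Multiset (Finset α)}
    (hD : ∀ b ∈ D, b.card = k) (u : α) :
    ∑ w ∈ univ.erase u, D.countP (fun b => u ∈ b ∧ w ∈ b) = replication D u * (k - 1) := by
  have hpair (w : α) : D.countP (fun b => u ∈ b ∧ w ∈ b) = replication (D.filter (u ∈ ·)) w := by
    simp only [replication, Multiset.countP_filter, and_comm]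
  have htotal : ∑ w, replication (D.filter (u ∈ ·)) w = replication D u * k := by
    rw [sum_replication_of_card_eq fun b hb => hD b (Multiset.mem_of_mem_filter hb), replication,
      Multiset.countP_eq_card_filter]
  have hself : replication (D.filter (u ∈ ·)) u = replication D u := by
    rw [← hpair, replication]
    simp only [and_self]
  simp only [hpair]
  rw [Nat.mul_sub_one, ← htotal, ← add_sum_erase _ _ (mem_univ u), hself, Nat.add_sub_cancel_left]

theorem IsCovering.mul_le_replication_mul {k l : ℕ} {D : Multiset (Finset α)}
    (hD : IsCovering k l D) (u : α) :
    l * (Fintype.card α - 1) ≤ replication D u * (k - 1) := by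
  rw [← sum_erase_countP_pair hD.card_eq u, ← card_univ, ← card_erase_of_mem (mem_univ u),
    mul_comm, ← smul_eq_mul]
  exact card_nsmul_le_sum _ _ _ fun w hw => hD.le_countP_pair u w (ne_of_mem_erase hw).symm

theorem IsCovering.ceil_le_replication {k l : ℕ} {D : Multiset (Finset α)}
    (hD : IsCovering k l D) (hk : 2 ≤ k) (u : α) :
    ⌈(l * (Fintype.card α - 1) : ℚ) / (k - 1)⌉ ≤ replication D u := by
  have hcard : 1 ≤ Fintype.card α := Fintype.card_pos_iff.mpr ⟨u⟩
  have hk1 : (0 : ℚ) < k - 1 := by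
    rw [sub_pos]; exact_mod_cast hk
  rw [Int.ceil_le, div_le_iff₀ hk1]
  have h := hD.mul_le_replication_mul u
  rw [← Nat.cast_le (α := ℚ)] at h
  push_cast [Nat.cast_sub hcard, Nat.cast_sub (by omega : 1 ≤ k)] at h
  exact_mod_cast h

end Covering

section Excess

variable {ι : Type*} [Fintype ι] {f : ι → ℕ} {r : ℕ}

theorem card_filter_eq_succ_le_sum_sub (hf : ∀ i, r ≤ f i) :
    (#{i | f i = r + 1} : ℤ) ≤ ∑ i, ((f i : ℤ) - r) := by
  rw [card_filter, Nat.cast_sum]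
  refine sum_le_sum fun i _ => ?_
  have := hf i
  split_ifs <;> omega

theorem two_mul_card_le_sum_sub_add (hf : ∀ i, r ≤ f i) :
    2 * (Fintype.card ι : ℤ) ≤
      ∑ i, ((f i : ℤ) - r) + 2 * #{i | f i = r} + #{i | f i = r + 1} := by
  rw [card_filter, card_filter, ← card_univ, card_eq_sum_ones, Nat.cast_sum, Nat.cast_sum,
    Nat.cast_sum, mul_sum, mul_sum, ← sum_add_distrib, ← sum_add_distrib]
  refine sum_le_sum fun i _ => ?_
  have := hf i
  split_ifs <;> omega

end Excess

theorem le_mul_add_mul_of_excess {α β a v c₀ c₁ : ℝ} (hα : 0 ≤ α) (hαβ : 2 * β ≤ α)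
    (h₀ : 2 * v ≤ a + 2 * c₀ + c₁) (h₁ : c₁ ≤ a) :
    α * v - (α - β) * a ≤ α * c₀ + β * c₁ := by
  nlinarith [mul_le_mul_of_nonneg_left h₀ hα, mul_le_mul_of_nonneg_left h₁ (sub_nonneg.mpr hαβ)]

theorem div_le_of_le_sub_mul_excess {α β b k r v : ℝ} (hk : 0 ≤ k) (hβα : β ≤ α)
    (h : α * v - (α - β) * (b * k - r * v) ≤ b) :
    (r * v * (α - β) + α * v) / (k * (α - β) + 1) ≤ b := by
  rw [div_le_iff₀ (by nlinarith)]
  linarith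

theorem stmt_19_general (v k l : ℕ) (hk : 3 ≤ k)
    (r : ℕ) (hr : (r : ℤ) = ⌈(l * (v - 1) : ℚ) / (k - 1)⌉)
    (α β : ℝ) (hα : 0 ≤ α) (hβ : 0 ≤ β) (hαβ : 2 * β ≤ α)
    (hyp : ∀ 𝓑 : Multiset (Finset (Fin v)),
      (∀ b ∈ 𝓑, b.card = k) →
      (∀ u w : Fin v, u ≠ w → l ≤ 𝓑.countP (fun b => u ∈ b ∧ w ∈ b)) →
      α * ((Finset.univ.filter
              (fun u : Fin v => 𝓑.countP (fun b => u ∈ b) = r)).card : ℝ)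
        + β * ((Finset.univ.filter
              (fun u : Fin v => 𝓑.countP (fun b => u ∈ b) = r + 1)).card : ℝ)
        ≤ (Multiset.card 𝓑 : ℝ)) :
    ∀ 𝓑 : Multiset (Finset (Fin v)),
      (∀ b ∈ 𝓑, b.card = k) →
      (∀ u w : Fin v, u ≠ w → l ≤ 𝓑.countP (fun b => u ∈ b ∧ w ∈ b)) →
      (r * v * (α - β) + α * v) / (k * (α - β) + 1) ≤ (Multiset.card 𝓑 : ℝ) := by
  intro 𝓑 hcard hcov
  have hrep (u : Fin v) : r ≤ replication 𝓑 u := by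
    have h := IsCovering.ceil_le_replication ⟨hcard, hcov⟩ (by omega) u
    rw [Fintype.card_fin, ← hr] at h
    exact_mod_cast h
  have hexcess : ∑ u, ((replication 𝓑 u : ℤ) - r) = Multiset.card 𝓑 * k - r * v := by
    rw [sum_sub_distrib, ← Nat.cast_sum, sum_replication_of_card_eq hcard]
    simp [mul_comm]
  have h₀ := two_mul_card_le_sum_sub_add hrep
  have h₁ := card_filter_eq_succ_le_sum_sub hrep
  rw [hexcess, Fintype.card_fin] at h₀
  rw [hexcess] at h₁
  refine div_le_of_le_sub_mul_excess (Nat.cast_nonneg k) (by linarith only [hβ, hαβ]) ?_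
  refine (le_mul_add_mul_of_excess hα hαβ ?_ ?_).trans (hyp 𝓑 hcard hcov)
  · exact_mod_cast h₀
  · exact_mod_cast h₁

theorem stmt_19 (v k l : ℕ) (hl : 0 < l) (hk : 3 ≤ k) (hkv : k < v)
    (r : ℕ) (hr : (r : ℤ) = ⌈(l * (v - 1) : ℚ) / (k - 1)⌉)
    (α β : ℝ) (hα : 0 ≤ α) (hβ : 0 ≤ β) (hαβ : 2 * β ≤ α)
    (hyp : ∀ 𝓑 : Multiset (Finset (Fin v)),
      (∀ b ∈ 𝓑, b.card = k) →
      (∀ u w : Fin v, u ≠ w → l ≤ 𝓑.countP (fun b => u ∈ b ∧ w ∈ b)) →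
      α * ((Finset.univ.filter
              (fun u : Fin v => 𝓑.countP (fun b => u ∈ b) = r)).card : ℝ)
        + β * ((Finset.univ.filter
              (fun u : Fin v => 𝓑.countP (fun b => u ∈ b) = r + 1)).card : ℝ)
        ≤ (Multiset.card 𝓑 : ℝ)) :
    ∀ 𝓑 : Multiset (Finset (Fin v)),
      (∀ b ∈ 𝓑, b.card = k) →
      (∀ u w : Fin v, u ≠ w → l ≤ 𝓑.countP (fun b => u ∈ b ∧ w ∈ b)) →
      (r * v * (α - β) + α * v) / (k * (α - β) + 1) ≤ (Multiset.card 𝓑 : ℝ) :=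
  stmt_19_general v k l hk r hr α β hα hβ hαβ hyp
end
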